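/- arXiv:2307.12599 — 5 statements merged into one kernel-verified Lean document; each statement's English description precedes it below -/
import Mathlib

section
/- Let c1, c2, c3 be real numbers and suppose j, k ∈ {1,2,3,4} with j ≠ k satisfy h_j − h_k = π. Then the two states ψ± = (Ψ_j ± i Ψ_k)/√2 are orthonormal product states (unit vectors with concurrence 0 that are orthogonal to each other), and their images U_d(c1,c2,c3)·ψ+ and U_d(c1,c2,c3)·ψ− are orthonormal maximally entangled states (unit vectors with concurrence 1 that are orthogonal to each other). -/
open Matrix Complex
open scoped Matrix Kronecker

noncomputable section

/-- Pauli matrices -/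
def σx : Matrix (Fin 2) (Fin 2) ℂ := !![0, 1; 1, 0]
def σy : Matrix (Fin 2) (Fin 2) ℂ := !![0, -Complex.I; Complex.I, 0]
def σz : Matrix (Fin 2) (Fin 2) ℂ := !![1, 0; 0, -1]

/-- H(c₁,c₂,c₃) = c₁ σx⊗σx + c₂ σy⊗σy + c₃ σz⊗σz -/
def Hmat (c1 c2 c3 : ℝ) : Matrix (Fin 2 × Fin 2) (Fin 2 × Fin 2) ℂ :=
  (c1 : ℂ) • (σx ⊗ₖ σx) + (c2 : ℂ) • (σy ⊗ₖ σy) + (c3 : ℂ) • (σz ⊗ₖ σz)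

/-- U_d(c₁,c₂,c₃) = exp(i H(c₁,c₂,c₃)/2) (matrix exponential) -/
def Ud (c1 c2 c3 : ℝ) : Matrix (Fin 2 × Fin 2) (Fin 2 × Fin 2) ℂ :=
  NormedSpace.exp ((Complex.I / 2) • Hmat c1 c2 c3)

/-- h₁ = c₁−c₂+c₃, h₂ = c₁+c₂−c₃, h₃ = −c₁−c₂−c₃, h₄ = −c₁+c₂+c₃ -/
def hval (c1 c2 c3 : ℝ) : Fin 4 → ℝ :=
  ![c1 - c2 + c3, c1 + c2 - c3, -c1 - c2 - c3, -c1 + c2 + c3]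

/-- computational basis vector |ab⟩ of ℂ⁴ = ℂ²⊗ℂ², indexed by pairs -/
def ket (a b : Fin 2) : Fin 2 × Fin 2 → ℂ := fun p => if p = (a, b) then 1 else 0

/-- the magic basis Ψ₁, Ψ₂, Ψ₃, Ψ₄ -/
def Psi : Fin 4 → (Fin 2 × Fin 2 → ℂ) :=
  ![((Real.sqrt 2 : ℂ))⁻¹ • (ket 0 0 + ket 1 1),
    (Complex.I * ((Real.sqrt 2 : ℂ))⁻¹) • (ket 0 1 + ket 1 0),
    ((Real.sqrt 2 : ℂ))⁻¹ • (ket 0 1 - ket 1 0),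
    (Complex.I * ((Real.sqrt 2 : ℂ))⁻¹) • (ket 0 0 - ket 1 1)]

/-- concurrence C = 2|αδ − βγ| of a two-qubit state with components (α,β,γ,δ) -/
def conc (v : Fin 2 × Fin 2 → ℂ) : ℝ :=
  2 * ‖v (0, 0) * v (1, 1) - v (0, 1) * v (1, 0)‖

/-- hermitian inner product on ℂ⁴ -/
def ip (v w : Fin 2 × Fin 2 → ℂ) : ℂ :=
  ∑ p : Fin 2 × Fin 2, (starRingEnd ℂ) (v p) * w p

/-!
The magic basis diagonalises `H`, with `H Ψ_m = h_m Ψ_m`, so `U_d` multiplies `Ψ_m` by the phase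
`e_m = exp(i h_m / 2)`. The Ψ_m are orthonormal, and the form `αδ - βγ` takes the value `1/2` on
each Ψ_m with vanishing polarisation between distinct ones, so `(a Ψ_j + b Ψ_k)/√2` has
concurrence `|a² + b²| / 2`. For ψ± this is `|1 + (± i)²| / 2 = 0`. Moreover `U_d ψ± =
(e_j Ψ_j ± i e_k Ψ_k)/√2`, and `h_j - h_k = π` gives `e_j = i e_k`, so both coefficients have the
same square and the concurrence is `|e_j|² = 1`. Unit-modulus coefficients keep both pairs
orthonormal.
-/

theorem Matrix.pow_mulVec_of_mulVec_eq_smul {R n : Type*} [CommSemiring R] [Fintype n]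
    [DecidableEq n] {A : Matrix n n R} {v : n → R} {μ : R} (h : A *ᵥ v = μ • v) (m : ℕ) :
    (A ^ m) *ᵥ v = μ ^ m • v := by
  induction m with
  | zero => simp
  | succ m ih => rw [pow_succ', ← mulVec_mulVec, ih, mulVec_smul, h, smul_smul, pow_succ]

section

attribute [local instance] Matrix.linftyOpNormedRing Matrix.linftyOpNormedAlgebra

theorem Matrix.exp_mulVec_of_mulVec_eq_smul {𝕂 n : Type*} [RCLike 𝕂] [Fintype n]
    [DecidableEq n] {A : Matrix n n 𝕂} {v : n → 𝕂} {μ : 𝕂} (h : A *ᵥ v = μ • v) :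
    NormedSpace.exp A *ᵥ v = NormedSpace.exp μ • v := by
  let L : Matrix n n 𝕂 →L[𝕂] (n → 𝕂) :=
    (LinearMap.applyₗ v ∘ₗ Matrix.toLin'.toLinearMap).toContinuousLinearMap
  refine ((NormedSpace.exp_series_hasSum_exp' (𝕂 := 𝕂) A).mapL L).unique ?_
  convert (NormedSpace.exp_series_hasSum_exp' (𝕂 := 𝕂) μ).smul_const v using 2 with m
  rw [L.map_smul]
  change _ • (A ^ m *ᵥ v) = _
  rw [pow_mulVec_of_mulVec_eq_smul h, smul_smul, smul_eq_mul]

end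

section

variable (u v w : Fin 2 × Fin 2 → ℂ) (a : ℂ)

lemma ip_add_left : ip (u + v) w = ip u w + ip v w := by
  simp only [ip, Pi.add_apply, map_add, add_mul, Finset.sum_add_distrib]

lemma ip_add_right : ip u (v + w) = ip u v + ip u w := by
  simp only [ip, Pi.add_apply, mul_add, Finset.sum_add_distrib]

lemma ip_smul_left : ip (a • u) v = starRingEnd ℂ a * ip u v := by
  simp only [ip, Pi.smul_apply, smul_eq_mul, map_mul, mul_assoc, Finset.mul_sum]

lemma ip_smul_right : ip u (a • v) = a * ip u v := by
  simp only [ip, Pi.smul_apply, smul_eq_mul, Finset.mul_sum, mul_left_comm]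

end

lemma conj_inv_sqrt_two : starRingEnd ℂ (Real.sqrt 2 : ℂ)⁻¹ = (Real.sqrt 2 : ℂ)⁻¹ := by
  rw [map_inv₀, Complex.conj_ofReal]

lemma ofReal_sqrt_two_sq : (Real.sqrt 2 : ℂ) ^ 2 = 2 := by
  rw [← Complex.ofReal_pow, Real.sq_sqrt zero_le_two, Complex.ofReal_ofNat]

lemma Hmat_mulVec_Psi (c1 c2 c3 : ℝ) (m : Fin 4) :
    Hmat c1 c2 c3 *ᵥ Psi m = (hval c1 c2 c3 m : ℂ) • Psi m := by
  fin_cases m <;> funext p <;> fin_cases p <;>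
    simp [Hmat, Psi, ket, hval, mulVec, dotProduct, Fintype.sum_prod_type, σx, σy, σz,
      Prod.ext_iff] <;>
    ring

lemma Ud_mulVec_Psi (c1 c2 c3 : ℝ) (m : Fin 4) :
    Ud c1 c2 c3 *ᵥ Psi m = Complex.exp (↑(hval c1 c2 c3 m / 2) * I) • Psi m := by
  rw [Ud, Matrix.exp_mulVec_of_mulVec_eq_smul (μ := I / 2 * hval c1 c2 c3 m),
    ← Complex.exp_eq_exp_ℂ]
  · push_cast
    ring_nf
  · rw [smul_mulVec, Hmat_mulVec_Psi, smul_smul]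

lemma ip_Psi_Psi (j k : Fin 4) : ip (Psi j) (Psi k) = if j = k then 1 else 0 := by
  fin_cases j <;> fin_cases k <;>
    simp [ip, Psi, ket, Fintype.sum_prod_type, Prod.ext_iff] <;>
    ring_nf <;>
    simp [ofReal_sqrt_two_sq]

def twoQubitDet (v : Fin 2 × Fin 2 → ℂ) : ℂ := v (0, 0) * v (1, 1) - v (0, 1) * v (1, 0)

def twoQubitDetPolar (v w : Fin 2 × Fin 2 → ℂ) : ℂ :=
  v (0, 0) * w (1, 1) + w (0, 0) * v (1, 1) - v (0, 1) * w (1, 0) - w (0, 1) * v (1, 0)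

lemma conc_eq (v : Fin 2 × Fin 2 → ℂ) : conc v = 2 * ‖twoQubitDet v‖ := rfl

lemma twoQubitDet_add (v w : Fin 2 × Fin 2 → ℂ) :
    twoQubitDet (v + w) = twoQubitDet v + twoQubitDet w + twoQubitDetPolar v w := by
  simp only [twoQubitDet, twoQubitDetPolar, Pi.add_apply]
  ring

lemma twoQubitDet_smul (a : ℂ) (v : Fin 2 × Fin 2 → ℂ) :
    twoQubitDet (a • v) = a ^ 2 * twoQubitDet v := by
  simp only [twoQubitDet, Pi.smul_apply, smul_eq_mul]
  ring

lemma twoQubitDetPolar_smul (a b : ℂ) (v w : Fin 2 × Fin 2 → ℂ) :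
    twoQubitDetPolar (a • v) (b • w) = a * b * twoQubitDetPolar v w := by
  simp only [twoQubitDetPolar, Pi.smul_apply, smul_eq_mul]
  ring

lemma twoQubitDet_Psi (m : Fin 4) : twoQubitDet (Psi m) = 2⁻¹ := by
  fin_cases m <;> simp [twoQubitDet, Psi, ket] <;> ring_nf <;> simp [ofReal_sqrt_two_sq]

lemma twoQubitDetPolar_Psi {j k : Fin 4} (hjk : j ≠ k) :
    twoQubitDetPolar (Psi j) (Psi k) = 0 := by
  fin_cases j <;> fin_cases k <;> simp_all [twoQubitDetPolar, Psi, ket] <;> ring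

def magicComb (j k : Fin 4) (a b : ℂ) : Fin 2 × Fin 2 → ℂ :=
  (Real.sqrt 2 : ℂ)⁻¹ • (a • Psi j + b • Psi k)

section

variable {j k : Fin 4}

lemma ip_magicComb (hjk : j ≠ k) (a b c d : ℂ) :
    ip (magicComb j k a b) (magicComb j k c d) =
      (starRingEnd ℂ a * c + starRingEnd ℂ b * d) / 2 := by
  simp only [magicComb, ip_add_left, ip_add_right, ip_smul_left, ip_smul_right, ip_Psi_Psi,
    hjk, hjk.symm, if_true, if_false, conj_inv_sqrt_two]
  field_simp
  linear_combination -(starRingEnd ℂ a * c + starRingEnd ℂ b * d) * ofReal_sqrt_two_sq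

lemma conc_magicComb (hjk : j ≠ k) (a b : ℂ) :
    conc (magicComb j k a b) = ‖a ^ 2 + b ^ 2‖ / 2 := by
  rw [conc_eq, magicComb, twoQubitDet_smul, twoQubitDet_add, twoQubitDet_smul, twoQubitDet_smul,
    twoQubitDetPolar_smul, twoQubitDet_Psi, twoQubitDet_Psi, twoQubitDetPolar_Psi hjk, inv_pow,
    ofReal_sqrt_two_sq,
    show (2 : ℂ)⁻¹ * (a ^ 2 * 2⁻¹ + b ^ 2 * 2⁻¹ + a * b * 0) = (a ^ 2 + b ^ 2) / 4 by ring,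
    norm_div]
  norm_num
  ring

lemma Ud_mulVec_magicComb (c1 c2 c3 : ℝ) (a b : ℂ) :
    Ud c1 c2 c3 *ᵥ magicComb j k a b =
      magicComb j k (Complex.exp (↑(hval c1 c2 c3 j / 2) * I) * a)
        (Complex.exp (↑(hval c1 c2 c3 k / 2) * I) * b) := by
  simp only [magicComb, mulVec_smul, mulVec_add, Ud_mulVec_Psi, smul_smul, mul_comm]

lemma magicComb_orthonormal (hjk : j ≠ k) {a b : ℂ} (ha : ‖a‖ = 1) (hb : ‖b‖ = 1) :
    ip (magicComb j k a b) (magicComb j k a b) = 1 ∧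
      ip (magicComb j k a (-b)) (magicComb j k a (-b)) = 1 ∧
      ip (magicComb j k a b) (magicComb j k a (-b)) = 0 := by
  simp only [ip_magicComb hjk, map_neg, neg_mul, mul_neg, neg_neg, Complex.conj_mul', ha, hb]
  norm_num

lemma conc_magicComb_of_sq_eq (hjk : j ≠ k) {a b : ℂ} (h : b ^ 2 = a ^ 2) :
    conc (magicComb j k a b) = ‖a‖ ^ 2 := by
  rw [conc_magicComb hjk, h, ← two_mul, norm_mul, norm_pow, Complex.norm_two]
  ring

end

lemma exp_half_mul_I_of_sub_eq_pi {x y : ℝ} (h : x - y = Real.pi) :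
    Complex.exp (↑(x / 2) * I) = I * Complex.exp (↑(y / 2) * I) := by
  rw [show x / 2 = y / 2 + Real.pi / 2 by linarith]
  push_cast
  rw [add_mul, Complex.exp_add, Complex.exp_pi_div_two_mul_I, mul_comm]

/-- If h_j − h_k = π then ψ± = (Ψ_j ± iΨ_k)/√2 are orthonormal product states and
their images under U_d(c₁,c₂,c₃) are orthonormal maximally entangled states. -/
theorem stmt0 (c1 c2 c3 : ℝ) (j k : Fin 4) (hjk : j ≠ k)
    (hπ : hval c1 c2 c3 j - hval c1 c2 c3 k = Real.pi)
    (ψp ψm : Fin 2 × Fin 2 → ℂ)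
    (hψp : ψp = ((Real.sqrt 2 : ℂ))⁻¹ • (Psi j + Complex.I • Psi k))
    (hψm : ψm = ((Real.sqrt 2 : ℂ))⁻¹ • (Psi j - Complex.I • Psi k)) :
    ip ψp ψp = 1 ∧ ip ψm ψm = 1 ∧ conc ψp = 0 ∧ conc ψm = 0 ∧ ip ψp ψm = 0 ∧
    ip ((Ud c1 c2 c3).mulVec ψp) ((Ud c1 c2 c3).mulVec ψp) = 1 ∧
    ip ((Ud c1 c2 c3).mulVec ψm) ((Ud c1 c2 c3).mulVec ψm) = 1 ∧
    conc ((Ud c1 c2 c3).mulVec ψp) = 1 ∧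
    conc ((Ud c1 c2 c3).mulVec ψm) = 1 ∧
    ip ((Ud c1 c2 c3).mulVec ψp) ((Ud c1 c2 c3).mulVec ψm) = 0 := by
  set e := I * Complex.exp (↑(hval c1 c2 c3 k / 2) * I)
  have he : ‖e‖ = 1 := by rw [norm_mul, Complex.norm_I, Complex.norm_exp_ofReal_mul_I, one_mul]
  have hψp' : ψp = magicComb j k 1 I := by rw [hψp, magicComb, one_smul]
  have hψm' : ψm = magicComb j k 1 (-I) := by
    rw [hψm, magicComb, one_smul, neg_smul, sub_eq_add_neg]
  have hUp : Ud c1 c2 c3 *ᵥ ψp = magicComb j k e e := by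
    rw [hψp', Ud_mulVec_magicComb, exp_half_mul_I_of_sub_eq_pi hπ, mul_one,
      mul_comm (Complex.exp _) I]
  have hUm : Ud c1 c2 c3 *ᵥ ψm = magicComb j k e (-e) := by
    rw [hψm', Ud_mulVec_magicComb, exp_half_mul_I_of_sub_eq_pi hπ, mul_one, mul_neg,
      mul_comm (Complex.exp _) I]
  obtain ⟨hp, hm, hpm⟩ := magicComb_orthonormal hjk (a := 1) norm_one Complex.norm_I
  obtain ⟨hUp', hUm', hUpm⟩ := magicComb_orthonormal hjk he he
  rw [hUp, hUm, hψp', hψm']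
  refine ⟨hp, hm, ?_, ?_, hpm, hUp', hUm', ?_, ?_, hUpm⟩
  · simp [conc_magicComb hjk]
  · simp [conc_magicComb hjk]
  · rw [conc_magicComb_of_sq_eq hjk rfl, he, one_pow]
  · rw [conc_magicComb_of_sq_eq hjk (neg_sq e), he, one_pow]
end
end

section
/- For all real numbers c1, c2, c3, the entangling power e_p(c1,c2,c3) equals one twelfth of the mean squared chord length: (1/18)·[3 − (cos(2c1)cos(2c2) + cos(2c2)cos(2c3) + cos(2c3)cos(2c1))] = (1/72)·Σ_{1≤j<k≤4} |e^{i h_j} − e^{i h_k}|². -/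
/-! A squared chord is `‖e^{ia} - e^{ib}‖² = 2 - 2 cos (a - b)`. The six differences `h_j - h_k`
are the angles `2cᵢ ± 2cₖ` over the three pairs `{i, k}`, and `cos (x + y) + cos (x - y) =
2 cos x cos y` collapses each pair to one product in `e_p`. -/

noncomputable section

theorem Complex.norm_exp_I_mul_ofReal_sub_exp_I_mul_ofReal_sq (a b : ℝ) :
    ‖Complex.exp (Complex.I * a) - Complex.exp (Complex.I * b)‖ ^ 2 =
      2 - 2 * Real.cos (a - b) := by
  rw [Complex.sq_norm, Complex.normSq_apply]
  simp only [Complex.sub_re, Complex.sub_im, Complex.exp_ofReal_mul_I_re,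
    Complex.exp_ofReal_mul_I_im, mul_comm Complex.I, Real.cos_sub]
  linear_combination Real.sin_sq_add_cos_sq a + Real.sin_sq_add_cos_sq b

/-- The entangling power e_p(c₁,c₂,c₃) equals one twelfth of the mean squared chord
length, i.e. (1/72) of the sum of the six squared chord lengths. -/
theorem stmt7 (c1 c2 c3 : ℝ) :
    (1 / 18 : ℝ) * (3 - (Real.cos (2 * c1) * Real.cos (2 * c2) +
        Real.cos (2 * c2) * Real.cos (2 * c3) + Real.cos (2 * c3) * Real.cos (2 * c1))) =
    (1 / 72 : ℝ) *
      (‖Complex.exp (Complex.I * (hval c1 c2 c3 0 : ℂ)) -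
          Complex.exp (Complex.I * (hval c1 c2 c3 1 : ℂ))‖ ^ 2 +
        ‖Complex.exp (Complex.I * (hval c1 c2 c3 0 : ℂ)) -
          Complex.exp (Complex.I * (hval c1 c2 c3 2 : ℂ))‖ ^ 2 +
        ‖Complex.exp (Complex.I * (hval c1 c2 c3 0 : ℂ)) -
          Complex.exp (Complex.I * (hval c1 c2 c3 3 : ℂ))‖ ^ 2 +
        ‖Complex.exp (Complex.I * (hval c1 c2 c3 1 : ℂ)) -
          Complex.exp (Complex.I * (hval c1 c2 c3 2 : ℂ))‖ ^ 2 +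
        ‖Complex.exp (Complex.I * (hval c1 c2 c3 1 : ℂ)) -
          Complex.exp (Complex.I * (hval c1 c2 c3 3 : ℂ))‖ ^ 2 +
        ‖Complex.exp (Complex.I * (hval c1 c2 c3 2 : ℂ)) -
          Complex.exp (Complex.I * (hval c1 c2 c3 3 : ℂ))‖ ^ 2) := by
  have h12 : hval c1 c2 c3 0 - hval c1 c2 c3 1 = 2 * c3 - 2 * c2 := by simp [hval]; ring
  have h13 : hval c1 c2 c3 0 - hval c1 c2 c3 2 = 2 * c3 + 2 * c1 := by simp [hval]; ring
  have h14 : hval c1 c2 c3 0 - hval c1 c2 c3 3 = 2 * c1 - 2 * c2 := by simp [hval]; ring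
  have h23 : hval c1 c2 c3 1 - hval c1 c2 c3 2 = 2 * c1 + 2 * c2 := by simp [hval]; ring
  have h24 : hval c1 c2 c3 1 - hval c1 c2 c3 3 = 2 * c1 - 2 * c3 := by simp [hval]; ring
  have h34 : hval c1 c2 c3 2 - hval c1 c2 c3 3 = -(2 * c2 + 2 * c3) := by simp [hval]; ring
  simp only [Complex.norm_exp_I_mul_ofReal_sub_exp_I_mul_ofReal_sq, h12, h13, h14, h23, h24,
    h34, Real.cos_neg, Real.cos_add, Real.cos_sub]
  ring
end
end

section
/- Let φ : Fin 4 → ℂ and h : Fin 4 → ℝ satisfy Σ_j φ_j² = 0, Σ_j |φ_j|² = 1, and |Σ_j φ_j² e^{i h_j}| = 1. Then Σ_j |φ_j|² e^{i h_j} = 0. -/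
/-! Since `∑ ‖φ j‖ ^ 2 = 1`, hypothesis `h3` is the equality case of the triangle inequality for the
terms `φ j ^ 2 * exp (I * h j)`, so each of them equals `c * ‖φ j‖ ^ 2` with `c` their (unit) sum.
Conjugating, `‖φ j‖ ^ 2 * exp (I * h j) = c * conj (φ j) ^ 2`, and summing gives
`c * conj (∑ φ j ^ 2) = 0`. -/

open Complex ComplexConjugate
open scoped ComplexOrder

theorem Complex.conj_sum_mul_eq_of_norm_sum_eq {ι : Type*} {s : Finset ι} {z : ι → ℂ}
    (hz : ‖∑ i ∈ s, z i‖ = ∑ i ∈ s, ‖z i‖) {j : ι} (hj : j ∈ s) :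
    conj (∑ i ∈ s, z i) * z j = ‖∑ i ∈ s, z i‖ * ‖z j‖ := by
  set c := ∑ i ∈ s, z i
  have hnorm : ∀ i, ‖conj c * z i‖ = ‖c‖ * ‖z i‖ := fun i => by rw [norm_mul, norm_conj]
  have hle : ∀ i ∈ s, (conj c * z i).re ≤ ‖conj c * z i‖ := fun i _ => re_le_norm _
  have hsum : ∑ i ∈ s, (conj c * z i).re = ∑ i ∈ s, ‖conj c * z i‖ := by
    simp only [hnorm, ← Finset.mul_sum, ← hz, ← re_sum]
    rw [conj_mul']
    norm_cast
    ring
  have hre := (Finset.sum_eq_sum_iff_of_le hle).mp hsum j hj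
  have hnonneg : ((0 : ℝ) : ℂ) ≤ conj c * z j := by rw [ofReal_zero]; exact re_eq_norm.mp hre
  rw [eq_re_of_ofReal_le hnonneg, hre, hnorm]
  push_cast
  rfl

/-- If Σ φ_j² = 0, Σ |φ_j|² = 1 and |Σ φ_j² e^{i h_j}| = 1, then Σ |φ_j|² e^{i h_j} = 0. -/
theorem stmt8 (φ : Fin 4 → ℂ) (h : Fin 4 → ℝ)
    (h1 : ∑ j, (φ j) ^ 2 = 0)
    (h2 : ∑ j, ‖φ j‖ ^ 2 = 1)
    (h3 : ‖∑ j, (φ j) ^ 2 * Complex.exp (Complex.I * (h j : ℂ))‖ = 1) :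
    ∑ j, ((‖φ j‖ : ℂ)) ^ 2 * Complex.exp (Complex.I * (h j : ℂ)) = 0 := by
  set e : Fin 4 → ℂ := fun j => Complex.exp (Complex.I * (h j : ℂ))
  set c := ∑ j, (φ j) ^ 2 * e j
  have he : ∀ j, ‖e j‖ = 1 := fun j => norm_exp_I_mul_ofReal (h j)
  have hnorm : ∀ j, ‖(φ j) ^ 2 * e j‖ = ‖φ j‖ ^ 2 := fun j => by simp [he]
  have hc : ‖c‖ = ∑ j, ‖(φ j) ^ 2 * e j‖ := by simp only [hnorm, h2, h3, c]
  have haligned : ∀ j, conj c * ((φ j) ^ 2 * e j) = ‖φ j‖ ^ 2 := fun j => by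
    rw [conj_sum_mul_eq_of_norm_sum_eq hc (Finset.mem_univ j), h3, hnorm]
    push_cast; ring
  have hterm : ∀ j, (‖φ j‖ : ℂ) ^ 2 * e j = c * conj (φ j) ^ 2 := fun j => by
    have := congrArg conj (haligned j)
    simp only [map_mul, map_pow, conj_conj, conj_ofReal] at this
    have hee : conj (e j) * e j = 1 := by rw [conj_mul', he]; norm_num
    rw [← this, mul_assoc, mul_assoc, hee, mul_one]
  calc ∑ j, (‖φ j‖ : ℂ) ^ 2 * e j = c * conj (∑ j, (φ j) ^ 2) := by
        simp only [hterm, map_sum, map_pow, Finset.mul_sum]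
    _ = 0 := by rw [h1, map_zero, mul_zero]
end

section
/- For every real number c2, the Cartan coordinates (π/2, c2, 0) of a special perfect entangler give entangling power e_p(π/2, c2, 0) = 2/9 (the maximum value), and the mean squared chord length satisfies (1/6)·Σ_{1≤j<k≤4} |e^{i h_j} − e^{i h_k}|² = 8/3, where h1 = π/2 − c2, h2 = π/2 + c2, h3 = −π/2 − c2, h4 = −π/2 + c2. -/
/-!
Since |e^{ia} − e^{ib}|² = 2 − 2 cos (a − b), the mean squared chord length is
2 − (1/3) Σ_{j<k} cos (h_j − h_k). The six differences h_j − h_k are ±2c_i ± 2c_l, and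
sum-to-product pairs their cosines into 2(cos 2c₁ cos 2c₂ + cos 2c₂ cos 2c₃ + cos 2c₃ cos 2c₁).
Hence the mean squared chord length is 12·e_p for all Cartan coordinates, and the value 8/3
follows from e_p(π/2, c₂, 0) = 2/9.
-/

open Matrix Complex
open scoped Matrix Kronecker

noncomputable section

theorem norm_exp_I_mul_sub_exp_I_mul_sq (a b : ℝ) :
    ‖exp (I * a) - exp (I * b)‖ ^ 2 = 2 - 2 * Real.cos (a - b) := by
  have hfactor : exp (I * a) - exp (I * b) = exp (I * b) * (exp (I * ↑(a - b)) - 1) := by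
    rw [mul_sub, ← Complex.exp_add]; push_cast; ring_nf
  rw [hfactor, norm_mul, norm_exp_I_mul_ofReal, one_mul, norm_exp_I_mul_ofReal_sub_one,
    Real.norm_eq_abs, sq_abs, mul_pow, Real.sin_sq_eq_half_sub, mul_div_cancel₀ _ two_ne_zero]
  ring

def entanglingPower (c1 c2 c3 : ℝ) : ℝ :=
  (1 / 18) * (3 - (Real.cos (2 * c1) * Real.cos (2 * c2) + Real.cos (2 * c2) * Real.cos (2 * c3) +
    Real.cos (2 * c3) * Real.cos (2 * c1)))

def chordLengthSq (c1 c2 c3 : ℝ) (j k : Fin 4) : ℝ :=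
  ‖exp (I * (hval c1 c2 c3 j : ℂ)) - exp (I * (hval c1 c2 c3 k : ℂ))‖ ^ 2

def meanSqChordLength (c1 c2 c3 : ℝ) : ℝ :=
  (1 / 6) * (chordLengthSq c1 c2 c3 0 1 + chordLengthSq c1 c2 c3 0 2 +
    chordLengthSq c1 c2 c3 0 3 + chordLengthSq c1 c2 c3 1 2 + chordLengthSq c1 c2 c3 1 3 +
    chordLengthSq c1 c2 c3 2 3)

theorem chordLengthSq_comm (c1 c2 c3 : ℝ) (j k : Fin 4) :
    chordLengthSq c1 c2 c3 j k = chordLengthSq c1 c2 c3 k j := by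
  rw [chordLengthSq, chordLengthSq, norm_sub_rev]

theorem chordLengthSq_eq (c1 c2 c3 : ℝ) (j k : Fin 4) :
    chordLengthSq c1 c2 c3 j k = 2 - 2 * Real.cos (hval c1 c2 c3 j - hval c1 c2 c3 k) :=
  norm_exp_I_mul_sub_exp_I_mul_sq _ _

theorem meanSqChordLength_eq_twelve_mul_entanglingPower (c1 c2 c3 : ℝ) :
    meanSqChordLength c1 c2 c3 = 12 * entanglingPower c1 c2 c3 := by
  rw [meanSqChordLength, chordLengthSq_comm c1 c2 c3 0 1, chordLengthSq_comm c1 c2 c3 2 3]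
  simp only [chordLengthSq_eq, hval, entanglingPower, cons_val_zero, cons_val_one, cons_val_two,
    cons_val_three, head_cons, tail_cons]
  have h12 := Real.cos_add_cos
    ((c1 + c2 - c3) - (-c1 - c2 - c3)) ((c1 - c2 + c3) - (-c1 + c2 + c3))
  have h13 := Real.cos_add_cos
    ((c1 - c2 + c3) - (-c1 - c2 - c3)) ((c1 + c2 - c3) - (-c1 + c2 + c3))
  have h23 := Real.cos_add_cos
    ((-c1 + c2 + c3) - (-c1 - c2 - c3)) ((c1 + c2 - c3) - (c1 - c2 + c3))
  ring_nf at h12 h13 h23 ⊢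
  linarith

theorem entanglingPower_pi_div_two_zero (c2 : ℝ) :
    entanglingPower (Real.pi / 2) c2 0 = 2 / 9 := by
  rw [entanglingPower, mul_div_cancel₀ _ two_ne_zero, mul_zero, Real.cos_pi, Real.cos_zero]
  ring

/-- For Cartan coordinates (π/2, c₂, 0) of a special perfect entangler, the entangling
power is 2/9 (the maximum) and the mean squared chord length is 8/3. -/
theorem stmt10 (c2 : ℝ) :
    (1 / 18 : ℝ) * (3 - (Real.cos (2 * (Real.pi / 2)) * Real.cos (2 * c2) +
        Real.cos (2 * c2) * Real.cos (2 * (0 : ℝ)) +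
        Real.cos (2 * (0 : ℝ)) * Real.cos (2 * (Real.pi / 2)))) = 2 / 9 ∧
    (1 / 6 : ℝ) *
      (‖Complex.exp (Complex.I * (hval (Real.pi / 2) c2 0 0 : ℂ)) -
          Complex.exp (Complex.I * (hval (Real.pi / 2) c2 0 1 : ℂ))‖ ^ 2 +
        ‖Complex.exp (Complex.I * (hval (Real.pi / 2) c2 0 0 : ℂ)) -
          Complex.exp (Complex.I * (hval (Real.pi / 2) c2 0 2 : ℂ))‖ ^ 2 +
        ‖Complex.exp (Complex.I * (hval (Real.pi / 2) c2 0 0 : ℂ)) -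
          Complex.exp (Complex.I * (hval (Real.pi / 2) c2 0 3 : ℂ))‖ ^ 2 +
        ‖Complex.exp (Complex.I * (hval (Real.pi / 2) c2 0 1 : ℂ)) -
          Complex.exp (Complex.I * (hval (Real.pi / 2) c2 0 2 : ℂ))‖ ^ 2 +
        ‖Complex.exp (Complex.I * (hval (Real.pi / 2) c2 0 1 : ℂ)) -
          Complex.exp (Complex.I * (hval (Real.pi / 2) c2 0 3 : ℂ))‖ ^ 2 +
        ‖Complex.exp (Complex.I * (hval (Real.pi / 2) c2 0 2 : ℂ)) -
          Complex.exp (Complex.I * (hval (Real.pi / 2) c2 0 3 : ℂ))‖ ^ 2) = 8 / 3 := by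
  have hep := entanglingPower_pi_div_two_zero c2
  refine ⟨hep, ?_⟩
  change meanSqChordLength (Real.pi / 2) c2 0 = 8 / 3
  rw [meanSqChordLength_eq_twelve_mul_entanglingPower, hep]
  norm_num
end
end

section
/- For every real number c2, the local invariants of the special perfect entangler U = U_d(π/2, c2, 0) are G1(U) = 0 and G2(U) = cos(2c2). -/
open Matrix Complex
open scoped Matrix Kronecker

noncomputable section

/-- the index identification (a,b) ↦ 2a+b matching the ordered basis (|00⟩,|01⟩,|10⟩,|11⟩) -/
def idx : Fin 2 × Fin 2 → Fin 4 :=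
  fun p => ⟨2 * p.1.1 + p.2.1, by have h1 := p.1.isLt; have h2 := p.2.isLt; omega⟩

/-- the magic-basis change matrix Q -/
def Qmat : Matrix (Fin 2 × Fin 2) (Fin 2 × Fin 2) ℂ :=
  Matrix.of fun p q =>
    ((Real.sqrt 2 : ℂ))⁻¹ *
      (!![1, 0, 0, Complex.I;
          0, Complex.I, 1, 0;
          0, Complex.I, -1, 0;
          1, 0, 0, -Complex.I]) (idx p) (idx q)

/-- m(U) = (Q† U Q)ᵀ (Q† U Q) -/
def mMat (U : Matrix (Fin 2 × Fin 2) (Fin 2 × Fin 2) ℂ) :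
    Matrix (Fin 2 × Fin 2) (Fin 2 × Fin 2) ℂ :=
  (Qmatᴴ * U * Qmat)ᵀ * (Qmatᴴ * U * Qmat)

/-- local invariant G₁(U) = tr(m(U))²/(16 det U) -/
def G1 (U : Matrix (Fin 2 × Fin 2) (Fin 2 × Fin 2) ℂ) : ℂ :=
  (Matrix.trace (mMat U)) ^ 2 / (16 * U.det)

/-- local invariant G₂(U) = (tr(m(U))² − tr(m(U)²))/(4 det U) -/
def G2 (U : Matrix (Fin 2 × Fin 2) (Fin 2 × Fin 2) ℂ) : ℂ :=
  ((Matrix.trace (mMat U)) ^ 2 - Matrix.trace (mMat U * mMat U)) / (4 * U.det)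

/-! The three operators σⱼ ⊗ σⱼ are simultaneously diagonal in the magic basis (the columns of
the unitary `Qmat`), so `Ud c = Q · diag(exp(i λₖ/2)) · Q†`, where the λₖ are the four sums
±c₁ ± c₂ ± c₃ whose signs multiply to −1; in particular `∑ λₖ = 0`. Hence `det (Ud c) = 1` and
`m (Ud c) = diag(exp(i λₖ))`, whose trace is `4 (cos c₁ cos c₂ cos c₃ + i sin c₁ sin c₂ sin c₃)`.
Since λ is linear in c, `m(Ud c)² = m(Ud 2c)`, which gives tr m². At c = (π/2, c₂, 0) the two
traces are 0 and `-4 cos 2c₂`. -/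

def magicEigenvalues (c1 c2 c3 : ℝ) : Fin 2 × Fin 2 → ℂ := fun p =>
  ![c1 - c2 + c3, c1 + c2 - c3, -c1 - c2 - c3, -c1 + c2 + c3] (idx p)

lemma sum_comp_magicEigenvalues (f : ℂ → ℂ) (c1 c2 c3 : ℝ) :
    ∑ p, f (magicEigenvalues c1 c2 c3 p) =
      f (c1 - c2 + c3) + f (c1 + c2 - c3) + f (-c1 - c2 - c3) + f (-c1 + c2 + c3) := by
  simp [Fintype.sum_prod_type, magicEigenvalues, idx, add_assoc]

lemma sum_magicEigenvalues (c1 c2 c3 : ℝ) : ∑ p, magicEigenvalues c1 c2 c3 p = 0 := by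
  rw [sum_comp_magicEigenvalues fun z => z]
  ring

lemma magicEigenvalues_two_mul (c1 c2 c3 : ℝ) (p : Fin 2 × Fin 2) :
    magicEigenvalues (2 * c1) (2 * c2) (2 * c3) p = 2 * magicEigenvalues c1 c2 c3 p := by
  fin_cases p <;> simp [magicEigenvalues, idx] <;> ring

lemma Qmat_mul_conjTranspose : Qmat * Qmatᴴ = 1 := by
  have h : ((Real.sqrt 2 : ℂ))⁻¹ ^ 2 = 1 / 2 := by
    rw [inv_pow, ← Complex.ofReal_pow, Real.sq_sqrt zero_le_two]; norm_num
  ext p q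
  fin_cases p <;> fin_cases q <;>
    simp [Qmat, idx, Matrix.mul_apply, Fintype.sum_prod_type] <;>
    ring_nf <;> simp only [Complex.I_sq, h] <;> norm_num

lemma conjTranspose_Qmat_mul : Qmatᴴ * Qmat = 1 := mul_eq_one_comm.mp Qmat_mul_conjTranspose

lemma Hmat_mul_Qmat (c1 c2 c3 : ℝ) :
    Hmat c1 c2 c3 * Qmat = Qmat * diagonal (magicEigenvalues c1 c2 c3) := by
  ext p q
  fin_cases p <;> fin_cases q <;>
    simp [Hmat, Qmat, σx, σy, σz, magicEigenvalues, idx, Matrix.mul_apply, Fintype.sum_prod_type,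
      Matrix.diagonal] <;> ring

lemma Ud_eq_conj_diagonal (c1 c2 c3 : ℝ) :
    Ud c1 c2 c3 = Qmat * diagonal (fun p => cexp (magicEigenvalues c1 c2 c3 p * I / 2)) * Qmatᴴ := by
  have hinv : Qmat⁻¹ = Qmatᴴ := inv_eq_right_inv Qmat_mul_conjTranspose
  have hH : (I / 2) • Hmat c1 c2 c3 =
      Qmat * diagonal ((I / 2) • magicEigenvalues c1 c2 c3) * Qmat⁻¹ := by
    rw [hinv, diagonal_smul, Matrix.mul_smul, Matrix.smul_mul, ← Hmat_mul_Qmat, mul_assoc,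
      Qmat_mul_conjTranspose, mul_one]
  have hQ : IsUnit Qmat :=
    (isUnit_iff_isUnit_det _).mpr (isUnit_det_of_right_inverse Qmat_mul_conjTranspose)
  rw [Ud, hH, exp_conj _ _ hQ, exp_diagonal, hinv, Pi.exp_def]
  simp only [← Complex.exp_eq_exp_ℂ, Pi.smul_apply, smul_eq_mul, div_mul_eq_mul_div, mul_comm I]

lemma mMat_conj_diagonal (d : Fin 2 × Fin 2 → ℂ) :
    mMat (Qmat * diagonal d * Qmatᴴ) = diagonal (fun p => d p * d p) := by
  have h : Qmatᴴ * (Qmat * diagonal d * Qmatᴴ) * Qmat = diagonal d := by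
    rw [← mul_assoc, ← mul_assoc, conjTranspose_Qmat_mul, one_mul, mul_assoc,
      conjTranspose_Qmat_mul, mul_one]
  rw [mMat, h, diagonal_transpose, diagonal_mul_diagonal]

lemma det_conj_diagonal (d : Fin 2 × Fin 2 → ℂ) :
    (Qmat * diagonal d * Qmatᴴ).det = ∏ p, d p := by
  rw [det_mul, det_mul, mul_right_comm, ← det_mul, Qmat_mul_conjTranspose, det_one, one_mul,
    det_diagonal]

lemma det_Ud (c1 c2 c3 : ℝ) : (Ud c1 c2 c3).det = 1 := by
  rw [Ud_eq_conj_diagonal, det_conj_diagonal, ← Complex.exp_sum, ← Finset.sum_div,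
    ← Finset.sum_mul, sum_magicEigenvalues, zero_mul, zero_div, Complex.exp_zero]

lemma mMat_Ud (c1 c2 c3 : ℝ) :
    mMat (Ud c1 c2 c3) = diagonal (fun p => cexp (magicEigenvalues c1 c2 c3 p * I)) := by
  rw [Ud_eq_conj_diagonal, mMat_conj_diagonal]
  congr 1
  funext p
  rw [← Complex.exp_add]
  ring_nf

lemma mMat_Ud_mul_self (c1 c2 c3 : ℝ) :
    mMat (Ud c1 c2 c3) * mMat (Ud c1 c2 c3) = mMat (Ud (2 * c1) (2 * c2) (2 * c3)) := by
  rw [mMat_Ud, mMat_Ud, diagonal_mul_diagonal]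
  congr 1
  funext p
  rw [← Complex.exp_add, magicEigenvalues_two_mul]
  ring_nf

lemma trace_mMat_Ud (c1 c2 c3 : ℝ) :
    trace (mMat (Ud c1 c2 c3)) =
      4 * (cos c1 * cos c2 * cos c3 + I * sin c1 * sin c2 * sin c3) := by
  rw [mMat_Ud, trace_diagonal, sum_comp_magicEigenvalues fun z => cexp (z * I)]
  simp only [add_mul, sub_mul, neg_mul, Complex.exp_add, Complex.exp_sub, Complex.exp_neg,
    Complex.cos, Complex.sin]
  field_simp
  ring_nf
  rw [Complex.I_pow_four]
  ring

/-- The local invariants of the special perfect entangler U_d(π/2, c₂, 0) are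
G₁ = 0 and G₂ = cos(2c₂). -/
theorem stmt11 (c2 : ℝ) :
    G1 (Ud (Real.pi / 2) c2 0) = 0 ∧
    G2 (Ud (Real.pi / 2) c2 0) = (Real.cos (2 * c2) : ℂ) := by
  have htr_sq := trace_mMat_Ud (2 * (Real.pi / 2)) (2 * c2) (2 * 0)
  rw [← mMat_Ud_mul_self, mul_div_cancel₀ _ two_ne_zero] at htr_sq
  simp only [G1, G2, trace_mMat_Ud, htr_sq, det_Ud]
  push_cast
  simp
end
end
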